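/- (Duality theorem) Let V ⊂ (ℝ_max^n)² be a congruence, A ∈ ℝ_max^{n×n}, C ∈ ℝ_max^{q×n}. For every closed congruence W ⊂ (ℝ_max^n)²: W is a (C,A)-conditioned invariant congruence containing V if and only if W^⊤ is an (Aᵗ,Cᵗ)-controlled invariant semimodule contained in V^⊤. -/

import Mathlib

/-!
Max-plus (tropical) framework.

The max-plus semiring `ℝ_max = ℝ ∪ {-∞}` is modelled as `WithBot ℝ`:
max-plus addition `a ⊕ b = max a b` is the lattice `⊔`, and max-plus
multiplication `a ⊙ b = a + b` is `+` (with `⊥ = -∞` absorbing).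
The topology induced by the metric `d(a,b) = |exp a - exp b|` is the
order topology.
-/

/-- The max-plus semiring `ℝ ∪ {-∞}`. -/
abbrev Rmax : Type := WithBot ℝ

/-- The topology of `ℝ_max` (the order topology, which coincides with the
topology induced by the metric `d(a,b) = |exp a - exp b|`). -/
instance : TopologicalSpace Rmax := Preorder.topology Rmax

instance : OrderTopology Rmax := ⟨rfl⟩

/-- Vectors with entries in a (max-plus-like) semiring `R`. -/
abbrev Vec (R : Type*) (n : ℕ) := Fin n → R

section Defs

variable {R : Type*} [LinearOrder R] [Add R] [OrderBot R]

/-- Max-plus scalar action on a vector: `(λ x)_i = λ ⊙ x_i = λ + x_i`. -/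
def sm {n : ℕ} (lam : R) (x : Vec R n) : Vec R n := fun i => lam + x i

/-- Max-plus matrix-vector product: `(A x)_i = ⊕_k A_{ik} ⊙ x_k = max_k (A_{ik} + x_k)`. -/
def mulVecMP {m n : ℕ} (A : Matrix (Fin m) (Fin n) R) (x : Vec R n) : Vec R m :=
  fun i => Finset.univ.sup fun k => A i k + x k

/-- A subsemimodule (max-plus cone) of `R^n`: a subset stable under
max-plus linear combinations `λ x ⊕ μ y`. -/
def IsSemimodule {n : ℕ} (K : Set (Vec R n)) : Prop :=
  ∀ x ∈ K, ∀ y ∈ K, ∀ lam mu : R, (sm lam x ⊔ sm mu y) ∈ K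

/-- Max-plus scalar action on a pair of vectors. -/
def smP {n : ℕ} (lam : R) (p : Vec R n × Vec R n) : Vec R n × Vec R n :=
  (sm lam p.1, sm lam p.2)

/-- A subsemimodule of `(R^n)²`. -/
def IsPairSemimodule {n : ℕ} (W : Set (Vec R n × Vec R n)) : Prop :=
  ∀ p ∈ W, ∀ q ∈ W, ∀ lam mu : R, (smP lam p ⊔ smP mu q) ∈ W

/-- A congruence on `R^n`: an equivalence relation which is a
subsemimodule of `(R^n)²`. -/
def IsCongruence {n : ℕ} (W : Set (Vec R n × Vec R n)) : Prop :=
  Equivalence (fun x y => (x, y) ∈ W) ∧ IsPairSemimodule W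

/-- The (max-plus) kernel of a matrix: `ker E = {(x,y) : E x = E y}`. -/
def kerM {p n : ℕ} (E : Matrix (Fin p) (Fin n) R) : Set (Vec R n × Vec R n) :=
  {w | mulVecMP E w.1 = mulVecMP E w.2}

/-- The image of a matrix: `Im E = {E x}`. -/
def imM {n q : ℕ} (E : Matrix (Fin n) (Fin q) R) : Set (Vec R n) :=
  {y | ∃ x : Vec R q, y = mulVecMP E x}

/-- `A W = {(A x, A y) : (x,y) ∈ W}` for a set of pairs `W`. -/
def mapCong {n : ℕ} (A : Matrix (Fin n) (Fin n) R) (W : Set (Vec R n × Vec R n)) :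
    Set (Vec R n × Vec R n) :=
  {p | ∃ w ∈ W, p = (mulVecMP A w.1, mulVecMP A w.2)}

/-- `A S = {A x : x ∈ S}`. -/
def mapSet {n : ℕ} (A : Matrix (Fin n) (Fin n) R) (S : Set (Vec R n)) : Set (Vec R n) :=
  {y | ∃ x ∈ S, y = mulVecMP A x}

/-- `A⁻¹ S = {x : A x ∈ S}`. -/
def invSet {n : ℕ} (A : Matrix (Fin n) (Fin n) R) (S : Set (Vec R n)) : Set (Vec R n) :=
  {x | mulVecMP A x ∈ S}

/-- `A⁻¹ U = {(x,y) : (A x, A y) ∈ U}` for a set of pairs `U`. -/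
def invPair {n : ℕ} (A : Matrix (Fin n) (Fin n) R) (U : Set (Vec R n × Vec R n)) :
    Set (Vec R n × Vec R n) :=
  {p | (mulVecMP A p.1, mulVecMP A p.2) ∈ U}

/-- The max-plus sum of two subsets of `R^n`: `X ⊕ Y = {x ⊕ y : x ∈ X, y ∈ Y}`. -/
def setSum {n : ℕ} (X Y : Set (Vec R n)) : Set (Vec R n) :=
  {z | ∃ x ∈ X, ∃ y ∈ Y, z = x ⊔ y}

/-- The max-plus sum of two subsets of `(R^n)²`. -/
def pairSum {n : ℕ} (X Y : Set (Vec R n × Vec R n)) : Set (Vec R n × Vec R n) :=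
  {z | ∃ x ∈ X, ∃ y ∈ Y, z = x ⊔ y}

/-- `W` is `(C,A)`-conditioned invariant: `A (W ∩ ker C) ⊆ W`. -/
def CondInv {n q : ℕ} (C : Matrix (Fin q) (Fin n) R) (A : Matrix (Fin n) (Fin n) R)
    (W : Set (Vec R n × Vec R n)) : Prop :=
  mapCong A (W ∩ kerM C) ⊆ W

/-- `X` is `(A,B)`-controlled invariant: `A X ⊆ X ⊕ Im B`. -/
def ContrInv {n q : ℕ} (A : Matrix (Fin n) (Fin n) R) (B : Matrix (Fin n) (Fin q) R)
    (X : Set (Vec R n)) : Prop :=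
  mapSet A X ⊆ setSum X (imM B)

/-- The max-plus scalar product `uᵗ v = ⊕_i u_i ⊙ v_i = max_i (u_i + v_i)`. -/
def dotMP {n : ℕ} (u v : Vec R n) : R := Finset.univ.sup fun i => u i + v i

/-- The orthogonal of a semimodule `X ⊆ R^n`:
`X^⊥ = {(x,y) : xᵗ z = yᵗ z, ∀ z ∈ X}`. -/
def orthS {n : ℕ} (X : Set (Vec R n)) : Set (Vec R n × Vec R n) :=
  {p | ∀ z ∈ X, dotMP p.1 z = dotMP p.2 z}

/-- The orthogonal of a congruence (or set of pairs) `W ⊆ (R^n)²`: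
`W^⊤ = {z : xᵗ z = yᵗ z, ∀ (x,y) ∈ W}`. -/
def orthC {n : ℕ} (W : Set (Vec R n × Vec R n)) : Set (Vec R n) :=
  {z | ∀ p ∈ W, dotMP p.1 z = dotMP p.2 z}

/-- The smallest congruence containing a set `S ⊆ (R^n)²`. -/
def spanCong {n : ℕ} (S : Set (Vec R n × Vec R n)) : Set (Vec R n × Vec R n) :=
  ⋂₀ {W | IsCongruence W ∧ S ⊆ W}

/-- The smallest semimodule containing a set `S ⊆ R^n`. -/
def spanSet {n : ℕ} (S : Set (Vec R n)) : Set (Vec R n) :=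
  ⋂₀ {K | IsSemimodule K ∧ S ⊆ K}

end Defs

/-!
Both implications are formal consequences of two biduality theorems in `ℝ_max^n`:
`(W^⊤)^⊥ = W` for a closed congruence `W` and `(X^⊥)^⊤ = X` for a closed semimodule `X`
containing `⊥`, together with the adjunction `(A x)ᵗ z = xᵗ (Aᵗ z)` and `ker C = (Im Cᵗ)^⊥`.
Applied to the closed semimodule `W^⊤ ⊕ Im Cᵗ`, whose orthogonal is `W ∩ ker C`, they turn
`A (W ∩ ker C) ⊆ W` into `Aᵗ W^⊤ ⊆ W^⊤ ⊕ Im Cᵗ` and back.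

Both biduality theorems are separation results proved by compactness of boxes `[⊥, b]`.
A point `z ∉ X` has a coordinate `i` where every `x ≤ z` of `X` stays below some `β < z_i`;
a decreasing sequence of compact sets then produces a finite penalty `b` with
`x_i ≤ bᵗx` on `X` and `bᵗz ≤ β`, so the pair `(e_i ⊕ b, b)` separates.
For a pair `(y, x) ∉ W` with `y ≤ x`, compactness gives a finite `w ≥ y` and `δ > 0` such
that `s ≰ w + δ` whenever `(s, T) ∈ W` and `x ≤ T`; minimising `sᵗ(-w)` over such pairs
is a `W`-invariant max-plus linear form, i.e. a vector of `W^⊤`, which separates `y` from `x`.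
-/

open Finset

section Order

variable {R : Type*} [LinearOrder R] {n : ℕ}

theorem subset_setSum_left [OrderBot R] {X Y : Set (Vec R n)} (hY : ⊥ ∈ Y) : X ⊆ setSum X Y :=
  fun x hx => ⟨x, hx, ⊥, hY, (sup_bot_eq x).symm⟩

theorem subset_setSum_right [OrderBot R] {X Y : Set (Vec R n)} (hX : ⊥ ∈ X) : Y ⊆ setSum X Y :=
  fun y hy => ⟨⊥, hX, y, hy, (bot_sup_eq y).symm⟩

variable [Add R] {W W' : Set (Vec R n × Vec R n)}

theorem IsCongruence.refl (hW : IsCongruence W) (t : Vec R n) : (t, t) ∈ W := hW.1.refl t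

theorem IsCongruence.symm (hW : IsCongruence W) {x y : Vec R n} (h : (x, y) ∈ W) : (y, x) ∈ W :=
  hW.1.symm h

theorem IsCongruence.trans (hW : IsCongruence W) {x y z : Vec R n} (h₁ : (x, y) ∈ W)
    (h₂ : (y, z) ∈ W) : (x, z) ∈ W :=
  hW.1.trans h₁ h₂

variable [OrderBot R] {X X' : Set (Vec R n)}

theorem orthC_antitone (h : W ⊆ W') : orthC W' ⊆ orthC W := fun _ hz p hp => hz p (h hp)

theorem orthS_antitone (h : X ⊆ X') : orthS X' ⊆ orthS X := fun _ hp z hz => hp z (h hz)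

theorem subset_orthS_orthC : W ⊆ orthS (orthC W) := fun p hp _ hz => hz p hp

theorem subset_orthC_orthS : X ⊆ orthC (orthS X) := fun z hz _ hp => hp z hz

end Order

theorem sm_zero {α : Type*} [AddZeroClass α] {n : ℕ} (x : Vec (WithBot α) n) : sm 0 x = x :=
  funext fun k => zero_add (x k)

theorem sm_bot {α : Type*} [Add α] {n : ℕ} (x : Vec (WithBot α) n) : sm ⊥ x = ⊥ :=
  funext fun k => WithBot.bot_add (x k)

section Algebra

variable {α : Type*} [AddCommMonoid α] [LinearOrder α] {m n : ℕ}
  {W : Set (Vec (WithBot α) n × Vec (WithBot α) n)} {X : Set (Vec (WithBot α) n)}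

theorem dotMP_comm (u v : Vec (WithBot α) n) : dotMP u v = dotMP v u :=
  Finset.sup_congr rfl fun _ _ => add_comm _ _

theorem le_dotMP (u v : Vec (WithBot α) n) (i : Fin n) : u i + v i ≤ dotMP u v :=
  Finset.le_sup (f := fun j => u j + v j) (mem_univ i)

theorem dotMP_le_iff {u v : Vec (WithBot α) n} {c : WithBot α} :
    dotMP u v ≤ c ↔ ∀ i, u i + v i ≤ c := by
  simp [dotMP]

theorem dotMP_bot_left (z : Vec (WithBot α) n) : dotMP ⊥ z = ⊥ :=
  le_bot_iff.mp (dotMP_le_iff.mpr fun i => by simp)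

theorem dotMP_bot_right (z : Vec (WithBot α) n) : dotMP z ⊥ = ⊥ := by
  rw [dotMP_comm, dotMP_bot_left]

theorem mulVecMP_bot (A : Matrix (Fin m) (Fin n) (WithBot α)) : mulVecMP A ⊥ = ⊥ :=
  funext fun i => dotMP_bot_right (A i)

theorem bot_mem_imM {q : ℕ} (B : Matrix (Fin n) (Fin q) (WithBot α)) : ⊥ ∈ imM B :=
  ⟨⊥, (mulVecMP_bot B).symm⟩

def unitVec (k : Fin n) : Vec (WithBot α) n := fun j => if j = k then 0 else ⊥

theorem dotMP_unitVec_left (k : Fin n) (z : Vec (WithBot α) n) : dotMP (unitVec k) z = z k := by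
  refine le_antisymm (dotMP_le_iff.mpr fun j => ?_) ?_
  · by_cases h : j = k
    · subst h; simp [unitVec]
    · simp [unitVec, h]
  · simpa [unitVec] using le_dotMP (unitVec k) z k

theorem dotMP_unitVec_right (k : Fin n) (z : Vec (WithBot α) n) : dotMP z (unitVec k) = z k := by
  rw [dotMP_comm, dotMP_unitVec_left]

theorem unitVec_le_iff {k : Fin n} {x : Vec (WithBot α) n} : unitVec k ≤ x ↔ 0 ≤ x k := by
  refine ⟨fun h => by simpa [unitVec] using h k, fun h j => ?_⟩
  by_cases hj : j = k
  · subst hj; simpa [unitVec] using h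
  · simp [unitVec, hj]

theorem bot_mem_orthC : (⊥ : Vec (WithBot α) n) ∈ orthC W := fun _ _ => by
  rw [dotMP_bot_right, dotMP_bot_right]

namespace IsCongruence

variable (hW : IsCongruence W)
include hW

theorem sup_mem {p q : Vec (WithBot α) n × Vec (WithBot α) n} (hp : p ∈ W) (hq : q ∈ W) :
    p ⊔ q ∈ W := by
  simpa [smP, sm_zero] using hW.2 p hp q hq 0 0

theorem smP_mem {p : Vec (WithBot α) n × Vec (WithBot α) n} (hp : p ∈ W) (a : WithBot α) :
    smP a p ∈ W := by
  simpa using hW.2 p hp p hp a a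

theorem bot_mem : ((⊥, ⊥) : Vec (WithBot α) n × Vec (WithBot α) n) ∈ W := by
  simpa [smP, sm_bot] using hW.smP_mem (hW.refl ⊥) ⊥

theorem finset_sup_mem {ι : Type*} (s : Finset ι) {a b : ι → Vec (WithBot α) n}
    (h : ∀ i ∈ s, (a i, b i) ∈ W) : (s.sup a, s.sup b) ∈ W := by
  induction s using Finset.cons_induction with
  | empty => exact hW.bot_mem
  | cons i s hi ih =>
    simp only [Finset.sup_cons]
    exact hW.sup_mem (p := (a i, b i)) (h i (mem_cons_self i s))
      (ih fun j hj => h j (mem_cons_of_mem hj))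

theorem sup_mem_sup {u v : Vec (WithBot α) n} (h : (u, v) ∈ W) (t : Vec (WithBot α) n) :
    (u ⊔ t, v ⊔ t) ∈ W :=
  hW.sup_mem (p := (u, v)) h (hW.refl t)

end IsCongruence

namespace IsSemimodule

variable (hX : IsSemimodule X)
include hX

theorem sup_mem {x y : Vec (WithBot α) n} (hx : x ∈ X) (hy : y ∈ X) : x ⊔ y ∈ X := by
  simpa [sm_zero] using hX x hx y hy 0 0

theorem sm_mem {x : Vec (WithBot α) n} (hx : x ∈ X) (a : WithBot α) : sm a x ∈ X := by
  simpa using hX x hx x hx a a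

theorem finset_sup_mem (h₀ : ⊥ ∈ X) {ι : Type*} (s : Finset ι) {x : ι → Vec (WithBot α) n}
    (hx : ∀ i ∈ s, x i ∈ X) : s.sup x ∈ X :=
  Finset.sup_induction h₀ (fun _ h₁ _ h₂ => hX.sup_mem h₁ h₂) hx

end IsSemimodule

variable [IsOrderedAddMonoid α]

theorem WithBot.add_finset_sup {ι : Type*} (a : WithBot α) (s : Finset ι) (f : ι → WithBot α) :
    a + s.sup f = s.sup fun i => a + f i :=
  Finset.apply_sup_eq_sup_comp (a + ·) (fun x y => (max_add_add_left a x y).symm)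
    (WithBot.add_bot a)

theorem sm_sup (a : WithBot α) (x y : Vec (WithBot α) n) : sm a (x ⊔ y) = sm a x ⊔ sm a y :=
  funext fun k => (max_add_add_left a (x k) (y k)).symm

theorem dotMP_sup_left (x y z : Vec (WithBot α) n) :
    dotMP (x ⊔ y) z = dotMP x z ⊔ dotMP y z := by
  rw [dotMP, dotMP, dotMP, ← Finset.sup_sup]
  exact Finset.sup_congr rfl fun i _ => by
    simp only [Pi.sup_apply, add_comm _ (z i)]; exact (max_add_add_left _ _ _).symm

theorem dotMP_sup_right (x y z : Vec (WithBot α) n) :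
    dotMP z (x ⊔ y) = dotMP z x ⊔ dotMP z y := by
  rw [dotMP_comm, dotMP_sup_left, dotMP_comm x, dotMP_comm y]

theorem dotMP_finset_sup_left {ι : Type*} (s : Finset ι) (x : ι → Vec (WithBot α) n)
    (z : Vec (WithBot α) n) : dotMP (s.sup x) z = s.sup fun i => dotMP (x i) z :=
  Finset.apply_sup_eq_sup_comp (dotMP · z) (fun x y => dotMP_sup_left x y z) (dotMP_bot_left z)

theorem dotMP_sm_left (a : WithBot α) (x z : Vec (WithBot α) n) :
    dotMP (sm a x) z = a + dotMP x z := by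
  rw [dotMP, dotMP, WithBot.add_finset_sup]
  exact Finset.sup_congr rfl fun i _ => add_assoc a (x i) (z i)

theorem dotMP_sm_right (a : WithBot α) (x z : Vec (WithBot α) n) :
    dotMP z (sm a x) = a + dotMP z x := by
  rw [dotMP_comm, dotMP_sm_left, dotMP_comm]

theorem mulVecMP_sup (A : Matrix (Fin m) (Fin n) (WithBot α)) (x y : Vec (WithBot α) n) :
    mulVecMP A (x ⊔ y) = mulVecMP A x ⊔ mulVecMP A y :=
  funext fun i => dotMP_sup_right x y (A i)

theorem mulVecMP_sm (A : Matrix (Fin m) (Fin n) (WithBot α)) (a : WithBot α)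
    (x : Vec (WithBot α) n) : mulVecMP A (sm a x) = sm a (mulVecMP A x) :=
  funext fun i => dotMP_sm_right a x (A i)

theorem dotMP_mulVecMP (A : Matrix (Fin m) (Fin n) (WithBot α)) (x : Vec (WithBot α) n)
    (z : Vec (WithBot α) m) : dotMP (mulVecMP A x) z = dotMP x (mulVecMP A.transpose z) := by
  simp only [dotMP, mulVecMP, Matrix.transpose_apply]
  simp_rw [add_comm (Finset.sup _ _), WithBot.add_finset_sup]
  rw [Finset.sup_comm]
  exact Finset.sup_congr rfl fun k _ => Finset.sup_congr rfl fun i _ => by ac_rfl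


theorem IsSemimodule.setSum {X Y : Set (Vec (WithBot α) n)} (hX : IsSemimodule X)
    (hY : IsSemimodule Y) : IsSemimodule (setSum X Y) := by
  rintro _ ⟨x, hx, y, hy, rfl⟩ _ ⟨x', hx', y', hy', rfl⟩ a b
  refine ⟨sm a x ⊔ sm b x', hX x hx x' hx' a b, sm a y ⊔ sm b y', hY y hy y' hy' a b, ?_⟩
  rw [sm_sup, sm_sup, sup_sup_sup_comm]

theorem isSemimodule_imM {q : ℕ} (B : Matrix (Fin n) (Fin q) (WithBot α)) :
    IsSemimodule (imM B) := by
  rintro _ ⟨u, rfl⟩ _ ⟨v, rfl⟩ a b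
  exact ⟨sm a u ⊔ sm b v, by rw [mulVecMP_sup, mulVecMP_sm, mulVecMP_sm]⟩

theorem isSemimodule_orthC : IsSemimodule (orthC W) := fun z hz w hw a b p hp => by
  simp only [dotMP_sup_right, dotMP_sm_right, hz p hp, hw p hp]

theorem kerM_eq_orthS_imM {q : ℕ} (C : Matrix (Fin q) (Fin n) (WithBot α)) :
    kerM C = orthS (imM C.transpose) := by
  ext p
  refine ⟨fun hp => ?_, fun hp => funext fun i => ?_⟩
  · rintro _ ⟨u, rfl⟩
    rw [← dotMP_mulVecMP, ← dotMP_mulVecMP, hp]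
  · simpa [← dotMP_mulVecMP, dotMP_unitVec_right] using hp _ ⟨unitVec i, rfl⟩

end Algebra

namespace Rmax

variable {n : ℕ}

theorem coe_add_le_coe_iff {b c : ℝ} {x : Rmax} :
    (b : Rmax) + x ≤ c ↔ x ≤ ((c - b : ℝ) : Rmax) := by
  induction x using WithBot.recBotCoe with
  | bot => simp
  | coe x => norm_cast; constructor <;> intro <;> linarith

theorem coe_add_lt_coe_iff {b c : ℝ} {x : Rmax} :
    (b : Rmax) + x < c ↔ x < ((c - b : ℝ) : Rmax) := by
  induction x using WithBot.recBotCoe with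
  | bot => simp
  | coe x => norm_cast; constructor <;> intro <;> linarith

theorem coe_le_coe_add_iff {b c : ℝ} {x : Rmax} :
    (c : Rmax) ≤ b + x ↔ ((c - b : ℝ) : Rmax) ≤ x := by
  induction x using WithBot.recBotCoe with
  | bot => simp
  | coe x => norm_cast; constructor <;> intro <;> linarith

theorem exists_coe_between {a b : Rmax} (h : a < b) : ∃ r : ℝ, a < r ∧ (r : Rmax) < b := by
  obtain ⟨c, hac, hcb⟩ := exists_between h
  obtain ⟨r, rfl⟩ := WithBot.ne_bot_iff_exists.mp (ne_bot_of_gt hac)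
  exact ⟨r, hac, hcb⟩

theorem exists_forall_lt_coe (z : Vec Rmax n) : ∃ β : ℝ, ∀ k, z k < β := by
  obtain ⟨b, hb⟩ := Finite.bddAbove_range z
  obtain ⟨c, hbc⟩ := exists_gt b
  obtain ⟨β, hbβ, -⟩ := exists_coe_between hbc
  exact ⟨β, fun k => (hb ⟨k, rfl⟩).trans_lt hbβ⟩

theorem eq_bot_of_forall_le_neg_nat {a : Rmax} (h : ∀ m : ℕ, a ≤ ((-m : ℝ) : Rmax)) :
    a = ⊥ := by
  induction a using WithBot.recBotCoe with
  | bot => rfl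
  | coe t =>
    obtain ⟨m, hm⟩ := exists_nat_gt (-t)
    have := WithBot.coe_le_coe.mp (h m)
    linarith

theorem le_coe_of_forall_le_coe_add {a : Rmax} {r : ℝ}
    (h : ∀ m : ℕ, a ≤ ((r + 1 / (m + 1) : ℝ) : Rmax)) : a ≤ r := by
  by_contra! hlt
  obtain ⟨t, hrt, hta⟩ := exists_coe_between hlt
  obtain ⟨m, hm⟩ := exists_nat_one_div_lt (sub_pos.mpr (WithBot.coe_lt_coe.mp hrt))
  exact hta.not_ge ((h m).trans (WithBot.coe_le_coe.mpr (by linarith)))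

end Rmax

section Topology

variable {n q : ℕ}

theorem Rmax.continuous_add_left (a : Rmax) : Continuous (a + ·) := by
  induction a using WithBot.recBotCoe with
  | bot => simpa using continuous_const
  | coe r =>
    have : (r + · : Rmax → Rmax) = (OrderIso.addLeft r).withBotCongr := by
      funext x; cases x <;> rfl
    rw [this]
    exact OrderIso.continuous _

theorem continuous_sup_const (x : Vec Rmax n) : Continuous fun s : Vec Rmax n => s ⊔ x :=
  continuous_pi fun k => (continuous_apply k).sup continuous_const

theorem continuous_dotMP_right (u : Vec Rmax n) : Continuous (dotMP u) :=
  Continuous.finset_sup_apply fun i _ => (Rmax.continuous_add_left (u i)).comp (continuous_apply i)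

theorem continuous_mulVecMP (A : Matrix (Fin q) (Fin n) Rmax) : Continuous (mulVecMP A) :=
  continuous_pi fun i => continuous_dotMP_right (A i)

theorem isClosed_orthC (W : Set (Vec Rmax n × Vec Rmax n)) : IsClosed (orthC W) := by
  have : orthC W = ⋂ p ∈ W, {z | dotMP p.1 z = dotMP p.2 z} := by ext; simp [orthC]
  rw [this]
  exact isClosed_biInter fun p _ =>
    isClosed_eq (continuous_dotMP_right p.1) (continuous_dotMP_right p.2)

theorem exists_mulVecMP_inf_eq (B : Matrix (Fin n) (Fin q) Rmax) (β : ℝ) :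
    ∃ M : ℝ, ∀ u, mulVecMP B u ≤ (fun _ => (β : Rmax)) →
      mulVecMP B (u ⊓ fun _ => (M : Rmax)) = mulVecMP B u := by
  obtain ⟨M, hM⟩ := Finite.bddAbove_range fun kj : Fin n × Fin q => β - (B kj.1 kj.2).unbotD 0
  refine ⟨M, fun u hu => funext fun k => Finset.sup_congr rfl fun j _ => ?_⟩
  by_cases hB : B k j = ⊥
  · simp [hB]
  obtain ⟨b, hb⟩ := WithBot.ne_bot_iff_exists.mp hB
  have hbu : (b : Rmax) + u j ≤ β := hb ▸ (le_dotMP (B k) u j).trans (hu k)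
  have hbM : β - b ≤ M := by simpa [← hb] using hM ⟨(k, j), rfl⟩
  have huM : u j ≤ M := (Rmax.coe_add_le_coe_iff.mp hbu).trans (by exact_mod_cast hbM)
  rw [Pi.inf_apply, inf_eq_left.mpr huM]

theorem IsClosed.setSum_imM {Z : Set (Vec Rmax n)} (hZ : IsClosed Z)
    (B : Matrix (Fin n) (Fin q) Rmax) : IsClosed (setSum Z (imM B)) := by
  refine isClosed_of_closure_subset fun z hz => ?_
  obtain ⟨β, hβ⟩ := Rmax.exists_forall_lt_coe z
  obtain ⟨M, hM⟩ := exists_mulVecMP_inf_eq B β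
  set U : Set (Vec Rmax n) := Set.pi Set.univ fun _ => Set.Iio (β : Rmax)
  set K := (Z ∩ Set.Icc ⊥ fun _ => (β : Rmax)) ×ˢ Set.Icc ⊥ fun _ => (M : Rmax)
  set Φ : Vec Rmax n × Vec Rmax q → Vec Rmax n := fun p => p.1 ⊔ mulVecMP B p.2
  have hΦK : IsCompact (Φ '' K) := ((isCompact_Icc.inter_left hZ).prod isCompact_Icc).image
    (continuous_pi fun k => ((continuous_apply k).comp continuous_fst).sup
      ((continuous_apply k).comp ((continuous_mulVecMP B).comp continuous_snd)))
  have hsub : U ∩ setSum Z (imM B) ⊆ Φ '' K := by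
    rintro _ ⟨hxU, w, hw, _, ⟨u, rfl⟩, rfl⟩
    have hle : w ⊔ mulVecMP B u ≤ fun _ => (β : Rmax) := fun k => (hxU k trivial).le
    refine ⟨(w, u ⊓ fun _ => (M : Rmax)),
      ⟨⟨hw, bot_le, le_sup_left.trans hle⟩, bot_le, inf_le_right⟩, ?_⟩
    simp only [Φ, hM u (le_sup_right.trans hle)]
  have hU : IsOpen U := isOpen_set_pi Set.finite_univ fun _ _ => isOpen_Iio
  obtain ⟨⟨w, u⟩, ⟨⟨hw, -⟩, -⟩, rfl⟩ :=
    hΦK.isClosed.closure_subset_iff.mpr hsub (hU.inter_closure ⟨fun k _ => hβ k, hz⟩)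
  exact ⟨w, hw, _, ⟨u, rfl⟩, rfl⟩

end Topology

section SemimoduleDuality

variable {n : ℕ} {X : Set (Vec Rmax n)}

theorem dotMP_coe_le_coe_iff {c : Fin n → ℝ} {t : ℝ} {x : Vec Rmax n} :
    dotMP (fun k => (c k : Rmax)) x ≤ t ↔ x ≤ fun k => ((t - c k : ℝ) : Rmax) := by
  simp only [dotMP_le_iff, Rmax.coe_add_le_coe_iff, Pi.le_def]

theorem IsSemimodule.exists_normalize (hX : IsSemimodule X) {x b : Vec Rmax n} (hx : x ∈ X)
    {i : Fin n} (h : dotMP b x < x i) : ∃ x' ∈ X, x' i = 0 ∧ dotMP b x' ≤ 0 := by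
  obtain ⟨l, hl⟩ := WithBot.ne_bot_iff_exists.mp (ne_bot_of_gt h)
  have hcancel : ((-l : ℝ) : Rmax) + x i = 0 := by rw [← hl, ← WithBot.coe_add]; simp
  refine ⟨sm ((-l : ℝ) : Rmax) x, hX.sm_mem hx _, hcancel, ?_⟩
  rw [dotMP_sm_right, ← hcancel]
  exact add_le_add_right h.le _

theorem IsSemimodule.exists_coord_gap (hX : IsSemimodule X) (h₀ : ⊥ ∈ X) (hXc : IsClosed X)
    {z : Vec Rmax n} (hz : z ∉ X) :
    ∃ i, ∃ β : ℝ, (β : Rmax) < z i ∧ ∀ x ∈ X, x ≤ z → x i < β := by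
  have hD : IsCompact (X ∩ Set.Icc ⊥ z) := isCompact_Icc.inter_left hXc
  have hmax : ∀ k, ∃ x ∈ X ∩ Set.Icc ⊥ z, IsMaxOn (· k) (X ∩ Set.Icc ⊥ z) x := fun k =>
    hD.exists_isMaxOn ⟨⊥, h₀, bot_le, bot_le⟩ (continuous_apply k).continuousOn
  choose x hxD hxmax using hmax
  obtain ⟨i, hi⟩ : ∃ i, x i i < z i := by
    by_contra! h
    have hsup : Finset.univ.sup x = z := le_antisymm (Finset.sup_le fun k _ => (hxD k).2.2)
      fun k => (h k).trans (Finset.le_sup (f := x) (Finset.mem_univ k) k)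
    exact hz (hsup ▸ hX.finset_sup_mem h₀ Finset.univ fun k _ => (hxD k).1)
  obtain ⟨β, hβ, hβz⟩ := Rmax.exists_coe_between hi
  exact ⟨i, β, hβz, fun y hy hyz => (hxmax i ⟨hy, bot_le, hyz⟩).trans_lt hβ⟩

noncomputable def gapBox (z : Vec Rmax n) (β : ℝ) (m : ℕ) : Fin n → ℝ :=
  fun k => if z k = ⊥ then -m else (z k).unbotD 0 - β

theorem gapBox_antitone (z : Vec Rmax n) (β : ℝ) : Antitone (gapBox z β) := fun m m' h k => by
  unfold gapBox; split_ifs <;> simp [h]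

theorem dotMP_neg_gapBox_le (z : Vec Rmax n) (β : ℝ) (m : ℕ) :
    dotMP (fun k => ((-gapBox z β m k : ℝ) : Rmax)) z ≤ β := by
  refine dotMP_le_iff.mpr fun k => ?_
  by_cases hk : z k = ⊥
  · simp [hk]
  obtain ⟨r, hr⟩ := WithBot.ne_bot_iff_exists.mp hk
  simp [gapBox, ← hr, ← WithBot.coe_add]

theorem sm_le_of_forall_le_gapBox {z x : Vec Rmax n} {β : ℝ}
    (h : ∀ m, x ≤ fun k => (gapBox z β m k : Rmax)) : sm (β : Rmax) x ≤ z := fun k => by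
  by_cases hk : z k = ⊥
  · have : x k = ⊥ := Rmax.eq_bot_of_forall_le_neg_nat fun m => by simpa [gapBox, hk] using h m k
    simp [sm, this]
  obtain ⟨r, hr⟩ := WithBot.ne_bot_iff_exists.mp hk
  rw [← hr]
  exact Rmax.coe_add_le_coe_iff.mpr (by simpa [gapBox, hk, ← hr] using h 0 k)

theorem IsSemimodule.exists_penalty (hX : IsSemimodule X) (hXc : IsClosed X) {z : Vec Rmax n}
    {i : Fin n} {β : ℝ} (hgap : ∀ x ∈ X, x ≤ z → x i < β) :
    ∃ b : Vec Rmax n, dotMP b z ≤ β ∧ ∀ x ∈ X, x i ≤ dotMP b x := by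
  by_contra! h
  set A : ℕ → Set (Vec Rmax n) :=
    fun m => X ∩ {x | x i = 0} ∩ Set.Iic fun k => (gapBox z β m k : Rmax)
  have hA : ∀ m, (A m).Nonempty := fun m => by
    obtain ⟨x, hx, hlt⟩ := h _ (dotMP_neg_gapBox_le z β m)
    obtain ⟨x', hx', hx'i, hx'b⟩ := hX.exists_normalize hx hlt
    refine ⟨x', ⟨hx', hx'i⟩, ?_⟩
    have := (dotMP_coe_le_coe_iff (c := fun k => -gapBox z β m k) (t := 0)).mp (by simpa using hx'b)
    simpa only [Set.mem_Iic, zero_sub, neg_neg] using this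
  have hAanti : ∀ m, A (m + 1) ⊆ A m := fun m =>
    Set.inter_subset_inter_right _ (Set.Iic_subset_Iic.mpr fun k =>
      WithBot.coe_le_coe.mpr (gapBox_antitone z β m.le_succ k))
  have hAclosed : ∀ m, IsClosed (A m) := fun m =>
    (hXc.inter (isClosed_eq (continuous_apply i) continuous_const)).inter isClosed_Iic
  have hA0 : IsCompact (A 0) :=
    isCompact_Icc.of_isClosed_subset (hAclosed 0) fun x hx => ⟨bot_le, hx.2⟩
  obtain ⟨x, hx⟩ := IsCompact.nonempty_iInter_of_sequence_nonempty_isCompact_isClosed A hAanti hA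
    hA0 hAclosed
  simp only [Set.mem_iInter] at hx
  have hβx := hgap _ (hX.sm_mem (hx 0).1.1 β) (sm_le_of_forall_le_gapBox fun m => (hx m).2)
  have hxi : x i = 0 := (hx 0).1.2
  simp [sm, hxi] at hβx

theorem orthC_orthS_eq (hX : IsSemimodule X) (h₀ : ⊥ ∈ X) (hXc : IsClosed X) :
    orthC (orthS X) = X := by
  refine Set.Subset.antisymm (fun z hz => ?_) subset_orthC_orthS
  by_contra hzX
  obtain ⟨i, β, hβz, hgap⟩ := hX.exists_coord_gap h₀ hXc hzX
  obtain ⟨b, hbz, hbX⟩ := hX.exists_penalty hXc hgap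
  have hp : (unitVec i ⊔ b, b) ∈ orthS X := fun x hx => by
    simp only [dotMP_sup_left, dotMP_unitVec_left, sup_eq_right.mpr (hbX x hx)]
  have hzp := hz _ hp
  simp only [dotMP_sup_left, dotMP_unitVec_left] at hzp
  exact (hbz.trans_lt hβz).not_ge (hzp ▸ le_sup_left)

end SemimoduleDuality

section CongruenceDuality

variable {n : ℕ} {W : Set (Vec Rmax n × Vec Rmax n)}

theorem le_of_forall_le_approx {y s : Vec Rmax n}
    (h : ∀ m : ℕ, s ≤ fun k => (((y k).unbotD (-(m : ℝ)) + 1 / (m + 1) : ℝ) : Rmax)) : s ≤ y := by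
  intro k
  by_cases hk : y k = ⊥
  · refine hk ▸ (Rmax.eq_bot_of_forall_le_neg_nat fun m => (h (m + 1) k).trans ?_).le
    have : (1 : ℝ) / (m + 1 + 1) ≤ 1 := div_le_one_of_le₀ (by linarith) (by positivity)
    simp only [hk, WithBot.unbotD_bot, WithBot.coe_le_coe]
    push_cast
    linarith
  obtain ⟨r, hr⟩ := WithBot.ne_bot_iff_exists.mp hk
  rw [← hr]
  exact Rmax.le_coe_of_forall_le_coe_add fun m => by simpa [← hr] using h m k

theorem IsCongruence.sup_mem_sup_sup (hW : IsCongruence W) {s T y x : Vec Rmax n}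
    (hsT : (s, T) ∈ W) (hyT : y ≤ T) (hxT : x ≤ T) : (s ⊔ y, s ⊔ y ⊔ x) ∈ W := by
  have h₁ : (s ⊔ y, T) ∈ W := sup_eq_left.mpr hyT ▸ hW.sup_mem_sup hsT y
  have h₂ : (T, s ⊔ y ⊔ x) ∈ W := sup_eq_left.mpr hxT ▸ hW.sup_mem_sup (hW.symm h₁) x
  exact hW.trans h₁ h₂

theorem IsCongruence.exists_gap (hW : IsCongruence W) (hWc : IsClosed W) {y x : Vec Rmax n}
    (hyx : y ≤ x) (hnot : (y, x) ∉ W) :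
    ∃ (w : Fin n → ℝ) (δ : ℝ), 0 < δ ∧ (y ≤ fun k => (w k : Rmax)) ∧
      ∀ s T, (s, T) ∈ W → x ≤ T → ¬ s ≤ fun k => ((w k + δ : ℝ) : Rmax) := by
  by_contra! h
  set w : ℕ → Fin n → ℝ := fun m k => (y k).unbotD (-(m : ℝ))
  have hyw : ∀ m, y ≤ fun k => (w m k : Rmax) := fun m k => by
    simp only [w]; induction y k using WithBot.recBotCoe <;> simp
  set u : ℕ → Vec Rmax n := fun m k => ((w m k + 1 / (m + 1) : ℝ) : Rmax)
  have hu : ∀ m, u (m + 1) ≤ u m := fun m k => WithBot.coe_le_coe.mpr <|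
    add_le_add (by simp only [w]; induction y k using WithBot.recBotCoe <;> simp)
      (one_div_le_one_div_of_le (by positivity) (by simp))
  set B : ℕ → Set (Vec Rmax n) := fun m => Set.Icc y (u m) ∩ {s | (s, s ⊔ x) ∈ W}
  have hB : ∀ m, (B m).Nonempty := fun m => by
    obtain ⟨s, T, hsT, hxT, hsu⟩ := h (w m) (1 / (m + 1)) (by positivity) (hyw m)
    have hyu : y ≤ u m := fun k => (hyw m k).trans (WithBot.coe_le_coe.mpr (by simp; positivity))
    exact ⟨s ⊔ y, ⟨le_sup_right, sup_le hsu hyu⟩, hW.sup_mem_sup_sup hsT (hyx.trans hxT) hxT⟩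
  have hBclosed : ∀ m, IsClosed (B m) := fun m =>
    isClosed_Icc.inter (hWc.preimage (continuous_id.prodMk (continuous_sup_const x)))
  obtain ⟨s, hs⟩ := IsCompact.nonempty_iInter_of_sequence_nonempty_isCompact_isClosed B
    (fun m => Set.inter_subset_inter_left _ (Set.Icc_subset_Icc_right (hu m))) hB
    (isCompact_Icc.of_isClosed_subset (hBclosed 0) Set.inter_subset_left) hBclosed
  simp only [Set.mem_iInter] at hs
  have hsy : s = y := le_antisymm (le_of_forall_le_approx fun m => (hs m).1.2) (hs 0).1.1
  exact hnot (by simpa [hsy, sup_eq_right.mpr hyx] using (hs 0).2)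

/-- A `W`-invariant, max-plus linear functional of `t`, hence represented by a vector of `W^⊤`
(`IsCongruence.infDot_eq_dotMP`). -/
noncomputable def infDot (W : Set (Vec Rmax n × Vec Rmax n)) (c t : Vec Rmax n) : Rmax :=
  sInf ((fun p => dotMP p.1 c) '' {p | p ∈ W ∧ t ≤ p.2})

theorem infDot_le {c t s t' : Vec Rmax n} (h : (s, t') ∈ W) (ht : t ≤ t') :
    infDot W c t ≤ dotMP s c :=
  csInf_le (OrderBot.bddBelow _) ⟨(s, t'), ⟨h, ht⟩, rfl⟩

theorem IsCongruence.infDot_set_nonempty (hW : IsCongruence W) (c t : Vec Rmax n) :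
    ((fun p => dotMP p.1 c) '' {p | p ∈ W ∧ t ≤ p.2}).Nonempty :=
  Set.Nonempty.image _ ⟨(t, t), hW.refl t, le_rfl⟩

theorem IsCongruence.le_infDot (hW : IsCongruence W) {c t : Vec Rmax n} {a : Rmax}
    (h : ∀ s t', (s, t') ∈ W → t ≤ t' → a ≤ dotMP s c) : a ≤ infDot W c t :=
  le_csInf (hW.infDot_set_nonempty c t) (by rintro _ ⟨⟨s, t'⟩, ⟨hs, ht⟩, rfl⟩; exact h s t' hs ht)

theorem IsCongruence.infDot_le_infDot (hW : IsCongruence W) (c : Vec Rmax n) {u v : Vec Rmax n}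
    (h : (u, v) ∈ W) : infDot W c u ≤ infDot W c v :=
  hW.le_infDot fun s t' hst hvt => by
    have h' := hW.sup_mem_sup h t'
    rw [sup_eq_right.mpr hvt] at h'
    exact infDot_le (hW.trans hst (hW.symm h')) le_sup_left

theorem IsCongruence.exists_mem_add_dotMP_lt (hW : IsCongruence W) (c : Vec Rmax n) {k : Fin n}
    {a : Rmax} {γ : ℝ} (h : a + infDot W c (unitVec k) < γ) :
    ∃ s t, (s, t) ∈ W ∧ unitVec k ≤ t ∧ a + dotMP s c < γ := by
  induction a using WithBot.recBotCoe with
  | bot => exact ⟨unitVec k, unitVec k, hW.refl _, le_rfl, by simp⟩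
  | coe r =>
    obtain ⟨_, ⟨⟨s, t⟩, ⟨hst, hkt⟩, rfl⟩, hlt⟩ :=
      exists_lt_of_csInf_lt (hW.infDot_set_nonempty c _) (Rmax.coe_add_lt_coe_iff.mp h)
    exact ⟨s, t, hst, hkt, Rmax.coe_add_lt_coe_iff.mpr hlt⟩

theorem IsCongruence.dotMP_le_infDot (hW : IsCongruence W) (c u : Vec Rmax n) :
    dotMP u (fun k => infDot W c (unitVec k)) ≤ infDot W c u := by
  refine dotMP_le_iff.mpr fun k => ?_
  induction hu : u k using WithBot.recBotCoe with
  | bot => simp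
  | coe a =>
    refine hW.le_infDot fun s t' hst hut => ?_
    have hkt : unitVec k ≤ sm ((-a : ℝ) : Rmax) t' :=
      unitVec_le_iff.mpr (Rmax.coe_le_coe_add_iff.mpr (by simpa [hu] using hut k))
    have := infDot_le (c := c) (hW.smP_mem hst ((-a : ℝ) : Rmax)) hkt
    rw [dotMP_sm_left] at this
    calc (a : Rmax) + infDot W c (unitVec k)
        ≤ a + (((-a : ℝ) : Rmax) + dotMP s c) := add_le_add_right this _
      _ = dotMP s c := by rw [← add_assoc, ← WithBot.coe_add]; simp

theorem IsCongruence.infDot_le_dotMP (hW : IsCongruence W) (c v : Vec Rmax n) :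
    infDot W c v ≤ dotMP v (fun k => infDot W c (unitVec k)) := by
  by_contra! hlt
  obtain ⟨γ, hγ, hγF⟩ := Rmax.exists_coe_between hlt
  choose s t hst hkt hlt using fun k =>
    hW.exists_mem_add_dotMP_lt c ((le_dotMP v (fun k => infDot W c (unitVec k)) k).trans_lt hγ)
  have hS := hW.finset_sup_mem Finset.univ fun k _ => hW.smP_mem (hst k) (v k)
  have hvS : v ≤ Finset.univ.sup fun k => sm (v k) (t k) := fun k => by
    refine le_trans ?_ (Finset.le_sup (f := fun k => sm (v k) (t k)) (Finset.mem_univ k) k)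
    simpa [sm] using add_le_add_right (unitVec_le_iff.mp (hkt k)) (v k)
  have hdot : dotMP (Finset.univ.sup fun k => sm (v k) (s k)) c < γ := by
    rw [dotMP_finset_sup_left, Finset.sup_lt_iff (WithBot.bot_lt_coe γ)]
    exact fun k _ => (dotMP_sm_left _ _ _).trans_lt (hlt k)
  exact hγF.not_ge ((infDot_le hS hvS).trans hdot.le)

theorem IsCongruence.infDot_eq_dotMP (hW : IsCongruence W) (c v : Vec Rmax n) :
    infDot W c v = dotMP v (fun k => infDot W c (unitVec k)) :=
  le_antisymm (hW.infDot_le_dotMP c v) (hW.dotMP_le_infDot c v)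

theorem IsCongruence.infDot_mem_orthC (hW : IsCongruence W) (c : Vec Rmax n) :
    (fun k => infDot W c (unitVec k)) ∈ orthC W := fun p hp => by
  rw [← hW.infDot_eq_dotMP, ← hW.infDot_eq_dotMP]
  exact le_antisymm (hW.infDot_le_infDot c hp) (hW.infDot_le_infDot c (hW.symm hp))

theorem IsCongruence.exists_orthC_lt (hW : IsCongruence W) (hWc : IsClosed W) {y x : Vec Rmax n}
    (hyx : y ≤ x) (hnot : (y, x) ∉ W) : ∃ z ∈ orthC W, dotMP y z < dotMP x z := by
  obtain ⟨w, δ, hδ, hyw, hgap⟩ := hW.exists_gap hWc hyx hnot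
  set c : Vec Rmax n := fun k => ((-w k : ℝ) : Rmax)
  refine ⟨_, hW.infDot_mem_orthC c, ?_⟩
  rw [← hW.infDot_eq_dotMP, ← hW.infDot_eq_dotMP]
  have hyc : dotMP y c ≤ 0 := dotMP_le_iff.mpr fun k => by
    rw [add_comm]
    simpa using Rmax.coe_add_le_coe_iff (c := 0).mpr (by simpa using hyw k)
  have hδx : (δ : Rmax) ≤ infDot W c x := hW.le_infDot fun s T hsT hxT => by
    obtain ⟨k, hk⟩ : ∃ k, ((w k + δ : ℝ) : Rmax) < s k := by
      simpa [Pi.le_def] using hgap s T hsT hxT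
    refine le_trans ?_ (le_dotMP s c k)
    rw [add_comm]
    exact Rmax.coe_le_coe_add_iff.mpr (by simpa [add_comm] using hk.le)
  calc infDot W c y ≤ dotMP y c := infDot_le (hW.refl y) le_rfl
    _ ≤ 0 := hyc
    _ < δ := by exact_mod_cast hδ
    _ ≤ infDot W c x := hδx

theorem orthS_orthC_eq (hW : IsCongruence W) (hWc : IsClosed W) : orthS (orthC W) = W := by
  have key : ∀ {a b}, (a, b) ∈ orthS (orthC W) → (a, a ⊔ b) ∈ W := fun {a b} hab => by
    by_contra h
    obtain ⟨z, hz, hlt⟩ := hW.exists_orthC_lt hWc le_sup_left h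
    rw [dotMP_sup_left, hab z hz, sup_idem] at hlt
    exact hlt.false
  refine Set.Subset.antisymm (fun ⟨x, y⟩ hxy => ?_) subset_orthS_orthC
  have hyx : (y, x) ∈ orthS (orthC W) := fun z hz => (hxy z hz).symm
  exact hW.trans (key hxy) (hW.symm (sup_comm y x ▸ key hyx))

end CongruenceDuality

section InvarianceDuality

variable {n q : ℕ} {A : Matrix (Fin n) (Fin n) Rmax} {C : Matrix (Fin q) (Fin n) Rmax}
  {W : Set (Vec Rmax n × Vec Rmax n)}

theorem CondInv.contrInv_orthC (hW : IsCongruence W) (hWc : IsClosed W) (h : CondInv C A W) :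
    ContrInv A.transpose C.transpose (orthC W) := by
  set X := setSum (orthC W) (imM C.transpose)
  have hX : IsSemimodule X := isSemimodule_orthC.setSum (isSemimodule_imM _)
  have hX₀ : ⊥ ∈ X := subset_setSum_left (bot_mem_imM _) bot_mem_orthC
  have hXW : orthS X ⊆ W ∩ kerM C := fun p hp =>
    ⟨orthS_orthC_eq hW hWc ▸ orthS_antitone (subset_setSum_left (bot_mem_imM _)) hp,
      kerM_eq_orthS_imM C ▸ orthS_antitone (subset_setSum_right bot_mem_orthC) hp⟩
  rintro _ ⟨z, hz, rfl⟩
  show mulVecMP A.transpose z ∈ X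
  rw [← orthC_orthS_eq hX hX₀ ((isClosed_orthC W).setSum_imM _)]
  intro p hp
  rw [← dotMP_mulVecMP, ← dotMP_mulVecMP]
  exact hz _ (h ⟨p, hXW hp, rfl⟩)

theorem ContrInv.condInv_of_orthC (hW : IsCongruence W) (hWc : IsClosed W)
    (h : ContrInv A.transpose C.transpose (orthC W)) : CondInv C A W := by
  rintro _ ⟨p, ⟨hpW, hpC⟩, rfl⟩
  rw [← orthS_orthC_eq hW hWc]
  intro z hz
  obtain ⟨w, hw, _, ⟨u, rfl⟩, heq⟩ := h ⟨z, hz, rfl⟩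
  rw [dotMP_mulVecMP, dotMP_mulVecMP, heq, dotMP_sup_right, dotMP_sup_right, hw p hpW,
    ← dotMP_mulVecMP C, ← dotMP_mulVecMP C, hpC]

end InvarianceDuality

theorem duality_theorem_general
    {n q : ℕ} (A : Matrix (Fin n) (Fin n) Rmax) (C : Matrix (Fin q) (Fin n) Rmax)
    (V : Set (Vec Rmax n × Vec Rmax n))
    (W : Set (Vec Rmax n × Vec Rmax n)) (hW : IsCongruence W) (hWc : IsClosed W) :
    (CondInv C A W ∧ V ⊆ W) ↔
      (ContrInv A.transpose C.transpose (orthC W) ∧ orthC W ⊆ orthC V) :=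
  ⟨fun ⟨hinv, hVW⟩ => ⟨hinv.contrInv_orthC hW hWc, orthC_antitone hVW⟩,
    fun ⟨hinv, hVW⟩ => ⟨hinv.condInv_of_orthC hW hWc,
      subset_orthS_orthC.trans (orthS_orthC_eq hW hWc ▸ orthS_antitone hVW)⟩⟩

/-- (Duality theorem.) Let `V` be a congruence on `ℝ_max^n`.
For every closed congruence `W`: `W` is a `(C,A)`-conditioned invariant
congruence containing `V` iff `W^⊤` is an `(Aᵗ,Cᵗ)`-controlled invariant
semimodule contained in `V^⊤`. -/
theorem duality_theorem
    {n q : ℕ} (A : Matrix (Fin n) (Fin n) Rmax) (C : Matrix (Fin q) (Fin n) Rmax)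
    (V : Set (Vec Rmax n × Vec Rmax n)) (hV : IsCongruence V)
    (W : Set (Vec Rmax n × Vec Rmax n)) (hW : IsCongruence W) (hWc : IsClosed W) :
    (CondInv C A W ∧ V ⊆ W) ↔
      (ContrInv A.transpose C.transpose (orthC W) ∧ orthC W ⊆ orthC V) :=
  duality_theorem_general A C V W hW hWc
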